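/- Let $(X,d,\mu)$ be a doubling metric measure space with doubling constant $c_\mu$, $1<p<\infty$ with conjugate exponent $q$ ($1/p+1/q=1$), and $B_0$ a ball. Assume $f\in JN_p(B_0)$ with constant $K_f$ and $\lambda\ge\frac{1}{\mu(B_0)}\int_{11B_0}|f-f_{B_0}|\,d\mu$. Let $\{B_i(\lambda)\}_i$ and $\{B_j(2\lambda)\}_j$ be families of Calderón–Zygmund balls for $|f-f_{B_0}|$ at levels $\lambda$ and $2\lambda$ relative to $B_0$, and suppose every $B_j(2\lambda)$ is contained in $5B_i(\lambda)$ for some $i$. Then $\sum_j\mu(B_j(2\lambda)) \le \frac{c_\mu^{3/q}K_f}{\lambda}\left(\sum_i\mu(B_i(\lambda))\right)^{1/q}$. -/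

import Mathlib

/-!
Write `A = f_{B₀}` and, for a ball `B_j = B_j(2λ)`, let `D = 5B_i(λ)` be a ball containing it.
Since `⨍_D |f - A| ≤ λ`, the averages `f_D` and `A` differ by at most `λ`, so
`2λ < ⨍_{B_j} |f - A|` forces `λ < ⨍_{B_j} |f - f_D|`. Summing over the disjoint `B_j` inside
each `D` gives `λ ∑ⱼ μ(B_j) ≤ ∑ᵢ μ(5Bᵢ) ⨍_{5Bᵢ} |f - f_{5Bᵢ}|`. Hölder's inequality, the
John–Nirenberg condition for the balls `5Bᵢ` (whose fifths `Bᵢ` are disjoint) and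
`μ(5Bᵢ) ≤ c_μ³ μ(Bᵢ)` bound the right-hand side by `K (c_μ³ ∑ᵢ μ(Bᵢ))^{1/q}`. Comparing
`∫_{B_j} |f - A|` with `∫_D |f - A|` also shows `λ > 0` as soon as some `B_j` exists.
-/

open MeasureTheory Metric Set ENNReal

/-- `(X, d, μ)` is a doubling metric measure space with doubling constant `cμ`:
every ball has positive finite measure and `μ(2B) ≤ cμ · μ(B)` for all balls `B`. -/
def IsDoubling {X : Type*} [MetricSpace X] [MeasurableSpace X]
    (μ : Measure X) (cμ : ℝ) : Prop :=
  (∀ (x : X) (r : ℝ), 0 < r → 0 < μ (Metric.ball x r) ∧ μ (Metric.ball x r) < ⊤) ∧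
  ∀ (x : X) (r : ℝ), 0 < r → μ (Metric.ball x (2 * r)) ≤ ENNReal.ofReal cμ * μ (Metric.ball x r)

/-- `f` belongs to the John–Nirenberg space `JN_p(B₀)`, `B₀ = B(x₀, R)`, with constant `K`:
`∑ᵢ μ(Bᵢ) (⨍_{Bᵢ} |f - f_{Bᵢ}| dμ)^p ≤ K^p` whenever `{Bᵢ}` is a countable collection of
balls centered at points of `B₀` and contained in `11B₀` such that the balls `(1/5)Bᵢ` are
pairwise disjoint. -/
def IsJNp {X : Type*} [MetricSpace X] [MeasurableSpace X]
    (μ : Measure X) (p : ℝ) (x₀ : X) (R : ℝ) (f : X → ℝ) (K : ℝ) : Prop :=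
  ∀ (S : Set ℕ) (c : ℕ → X) (r : ℕ → ℝ),
    (∀ i ∈ S, c i ∈ Metric.ball x₀ R) →
    (∀ i ∈ S, Metric.ball (c i) (r i) ⊆ Metric.ball x₀ (11 * R)) →
    (S.PairwiseDisjoint fun i => Metric.ball (c i) (r i / 5)) →
    ∑' i : S, μ (Metric.ball (c i.1) (r i.1)) *
        ENNReal.ofReal
          ((⨍ x in Metric.ball (c i.1) (r i.1),
              |f x - ⨍ y in Metric.ball (c i.1) (r i.1), f y ∂μ| ∂μ) ^ p)
      ≤ ENNReal.ofReal (K ^ p)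

/-- `{B i = ball (c i) (r i)}_{i ∈ S}` is a family of Calderón–Zygmund balls for the
nonnegative function `g` at level `lam` relative to the ball `B₀ = B(x₀, R)`:
a countable family of pairwise disjoint balls centered at points of `B₀` with
`5Bᵢ ⊆ 11B₀`, such that `g ≤ lam` a.e. on `B₀ \ ⋃ᵢ 5Bᵢ`,
`lam < ⨍_{Bᵢ} g ≤ cμ³ lam` and `cμ⁻³ lam < ⨍_{5Bᵢ} g ≤ lam`. -/
def IsCZBalls {X : Type*} [MetricSpace X] [MeasurableSpace X]
    (μ : Measure X) (cμ : ℝ) (g : X → ℝ) (x₀ : X) (R lam : ℝ)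
    (S : Set ℕ) (c : ℕ → X) (r : ℕ → ℝ) : Prop :=
  (∀ i ∈ S, 0 < r i) ∧
  (∀ i ∈ S, c i ∈ Metric.ball x₀ R) ∧
  (∀ i ∈ S, Metric.ball (c i) (5 * r i) ⊆ Metric.ball x₀ (11 * R)) ∧
  (S.PairwiseDisjoint fun i => Metric.ball (c i) (r i)) ∧
  (∀ᵐ x ∂μ, x ∈ Metric.ball x₀ R \ (⋃ i ∈ S, Metric.ball (c i) (5 * r i)) → g x ≤ lam) ∧
  (∀ i ∈ S, lam < ⨍ x in Metric.ball (c i) (r i), g x ∂μ ∧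
      ⨍ x in Metric.ball (c i) (r i), g x ∂μ ≤ cμ ^ 3 * lam) ∧
  (∀ i ∈ S, lam / cμ ^ 3 < ⨍ x in Metric.ball (c i) (5 * r i), g x ∂μ ∧
      ⨍ x in Metric.ball (c i) (5 * r i), g x ∂μ ≤ lam)

open Function

section Average

variable {X : Type*} [MeasurableSpace X] {μ : Measure X} {s : Set X}

theorem abs_setAverage_le (g : X → ℝ) : |⨍ x in s, g x ∂μ| ≤ ⨍ x in s, |g x| ∂μ := by
  simpa only [setAverage_eq', Real.norm_eq_abs] using norm_integral_le_integral_norm g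

theorem setAverage_nonneg {g : X → ℝ} (hg : ∀ x, 0 ≤ g x) : 0 ≤ ⨍ x in s, g x ∂μ :=
  integral_nonneg hg

theorem MeasureTheory.IntegrableOn.abs_sub_const {f : X → ℝ} (hf : IntegrableOn f s μ)
    (hs : μ s ≠ ∞) (a : ℝ) : IntegrableOn (fun x => |f x - a|) s μ :=
  (hf.sub (integrableOn_const hs)).abs

theorem setAverage_add_const {f : X → ℝ} (hs₀ : μ s ≠ 0) (hs : μ s ≠ ∞)
    (hf : IntegrableOn f s μ) (a : ℝ) : ⨍ x in s, (f x + a) ∂μ = ⨍ x in s, f x ∂μ + a := by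
  have : IsFiniteMeasure (μ.restrict s) := isFiniteMeasure_restrict.2 hs
  rw [average, integral_add hf.to_average (integrable_const a), ← average, ← average,
    setAverage_const hs₀ hs]

theorem abs_setAverage_sub_le {f : X → ℝ} (hs₀ : μ s ≠ 0) (hs : μ s ≠ ∞)
    (hf : IntegrableOn f s μ) (a : ℝ) : |⨍ x in s, f x ∂μ - a| ≤ ⨍ x in s, |f x - a| ∂μ := by
  have h := setAverage_add_const hs₀ hs hf (-a)
  simp only [← sub_eq_add_neg] at h
  exact h ▸ abs_setAverage_le _

theorem setAverage_abs_sub_le_add {f : X → ℝ} (hs₀ : μ s ≠ 0) (hs : μ s ≠ ∞)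
    (hf : IntegrableOn f s μ) (a b : ℝ) :
    ⨍ x in s, |f x - a| ∂μ ≤ ⨍ x in s, |f x - b| ∂μ + |b - a| := by
  have hfb := hf.abs_sub_const hs b
  rw [← setAverage_add_const hs₀ hs hfb]
  refine integral_mono_of_nonneg (ae_of_all _ fun _ => abs_nonneg _)
    (hfb.add (integrableOn_const hs)).to_average (ae_of_all _ fun x => ?_)
  simpa only [sub_add_sub_cancel] using abs_sub_le (f x) b a

theorem setLIntegral_ofReal_eq_measure_mul_setAverage {g : X → ℝ} (hs : μ s ≠ ∞)
    (hg : IntegrableOn g s μ) (hg₀ : ∀ x, 0 ≤ g x) :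
    ∫⁻ x in s, ENNReal.ofReal (g x) ∂μ = μ s * ENNReal.ofReal (⨍ x in s, g x ∂μ) := by
  rw [← ofReal_integral_eq_lintegral_ofReal hg (ae_of_all _ hg₀), ← measure_smul_setAverage _ hs,
    smul_eq_mul, ENNReal.ofReal_mul measureReal_nonneg, ofReal_measureReal hs]

end Average

section Nested

variable {X : Type*} [MeasurableSpace X] {μ : Measure X} {B D : Set X} {lam : ℝ}

theorem pos_of_two_mul_lt_setAverage_of_setAverage_le {g : X → ℝ} (hg₀ : ∀ x, 0 ≤ g x)
    (hBD : B ⊆ D) (hB₀ : μ B ≠ 0) (hD : μ D ≠ ∞) (hg : IntegrableOn g D μ)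
    (hB : 2 * lam < ⨍ x in B, g x ∂μ) (hDlam : ⨍ x in D, g x ∂μ ≤ lam) : 0 < lam := by
  have hB_top : μ B ≠ ∞ := ne_top_of_le_ne_top hD (measure_mono hBD)
  have hmono : ∫ x in B, g x ∂μ ≤ ∫ x in D, g x ∂μ :=
    setIntegral_mono_set hg (ae_of_all _ hg₀) hBD.eventuallyLE
  rw [← measure_smul_setAverage _ hB_top, ← measure_smul_setAverage _ hD, smul_eq_mul,
    smul_eq_mul] at hmono
  have hB_pos : 0 < μ.real B := ENNReal.toReal_pos hB₀ hB_top
  by_contra! hlam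
  have hD_avg : ⨍ x in D, g x ∂μ = 0 := le_antisymm (hDlam.trans hlam) (setAverage_nonneg hg₀)
  have hB_avg : 0 < ⨍ x in B, g x ∂μ := by linarith [setAverage_nonneg (μ := μ) (s := B) hg₀]
  rw [hD_avg, mul_zero] at hmono
  linarith [mul_pos hB_pos hB_avg]

theorem lt_setAverage_abs_sub_setAverage {f : X → ℝ} {A : ℝ} (hBD : B ⊆ D) (hB₀ : μ B ≠ 0)
    (hD : μ D ≠ ∞) (hf : IntegrableOn f D μ)
    (hB : 2 * lam < ⨍ x in B, |f x - A| ∂μ) (hDlam : ⨍ x in D, |f x - A| ∂μ ≤ lam) :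
    lam < ⨍ x in B, |f x - ⨍ y in D, f y ∂μ| ∂μ := by
  have hD₀ : μ D ≠ 0 := fun h => hB₀ (measure_mono_null hBD h)
  have hB_top : μ B ≠ ∞ := ne_top_of_le_ne_top hD (measure_mono hBD)
  have := setAverage_abs_sub_le_add hB₀ hB_top (hf.mono_set hBD) A (⨍ y in D, f y ∂μ)
  have := abs_setAverage_sub_le hD₀ hD hf A
  linarith

theorem ofReal_mul_measure_le_setLIntegral {f : X → ℝ} {A : ℝ} (hBD : B ⊆ D) (hB₀ : μ B ≠ 0)
    (hD : μ D ≠ ∞) (hf : IntegrableOn f D μ)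
    (hB : 2 * lam < ⨍ x in B, |f x - A| ∂μ) (hDlam : ⨍ x in D, |f x - A| ∂μ ≤ lam) :
    ENNReal.ofReal lam * μ B ≤ ∫⁻ x in B, ENNReal.ofReal |f x - ⨍ y in D, f y ∂μ| ∂μ := by
  have hB_top : μ B ≠ ∞ := ne_top_of_le_ne_top hD (measure_mono hBD)
  rw [setLIntegral_ofReal_eq_measure_mul_setAverage hB_top
    ((hf.mono_set hBD).abs_sub_const hB_top _) fun _ => abs_nonneg _, mul_comm]
  gcongr
  exact (lt_setAverage_abs_sub_setAverage hBD hB₀ hD hf hB hDlam).le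

end Nested

theorem tsum_setLIntegral_le_of_subset {X J I : Type*} [MeasurableSpace X] {μ : Measure X}
    [Countable J] (ι : J → I) {E : J → Set X} {F : I → Set X} (hE : ∀ j, MeasurableSet (E j))
    (hdisj : Pairwise (Disjoint on E)) (hEF : ∀ j, E j ⊆ F (ι j)) (g : I → X → ℝ≥0∞) :
    ∑' j, ∫⁻ x in E j, g (ι j) x ∂μ ≤ ∑' i, ∫⁻ x in F i, g i x ∂μ := by
  rw [← (Equiv.sigmaFiberEquiv ι).tsum_eq, ENNReal.tsum_sigma']
  refine ENNReal.tsum_le_tsum fun i => ?_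
  calc ∑' b : {j // ι j = i}, ∫⁻ x in E b, g (ι b) x ∂μ
      = ∫⁻ x in ⋃ b : {j // ι j = i}, E b, g i x ∂μ := by
        rw [lintegral_iUnion (s := fun b : {j // ι j = i} => E b) (fun b => hE b)
          fun a b hab => hdisj (Subtype.coe_ne_coe.mpr hab)]
        exact tsum_congr fun b => by rw [b.2]
    _ ≤ ∫⁻ x in F i, g i x ∂μ :=
        lintegral_mono_set (iUnion_subset fun b => (hEF b).trans_eq (congrArg F b.2))

theorem ENNReal.tsum_mul_le_Lp_mul_Lq {ι : Type*} {p q : ℝ} (hpq : p.HolderConjugate q)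
    (f g : ι → ℝ≥0∞) :
    ∑' i, f i * g i ≤ (∑' i, f i ^ p) ^ (1 / p) * (∑' i, g i ^ q) ^ (1 / q) := by
  let _ : MeasurableSpace ι := ⊤
  simpa only [lintegral_count, Pi.mul_apply] using
    ENNReal.lintegral_mul_le_Lp_mul_Lq Measure.count hpq
      (measurable_from_top (f := f)).aemeasurable (measurable_from_top (f := g)).aemeasurable

theorem ENNReal.tsum_mul_le_weighted_Lp_mul_Lq {ι : Type*} {p q : ℝ} (hpq : p.HolderConjugate q)
    (w a : ι → ℝ≥0∞) :
    ∑' i, w i * a i ≤ (∑' i, w i * a i ^ p) ^ (1 / p) * (∑' i, w i) ^ (1 / q) := by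
  have hsplit : ∀ i, w i * a i = w i ^ (1 / p) * a i * w i ^ (1 / q) := fun i => by
    rw [mul_right_comm, ← ENNReal.rpow_add_of_nonneg _ _ (one_div_nonneg.2 hpq.nonneg)
      (one_div_nonneg.2 hpq.symm.nonneg), hpq.one_div_add_one_div, div_one, ENNReal.rpow_one]
  have hp : ∀ i, (w i ^ (1 / p) * a i) ^ p = w i * a i ^ p := fun i => by
    rw [ENNReal.mul_rpow_of_nonneg _ _ hpq.nonneg, ← ENNReal.rpow_mul,
      one_div_mul_cancel hpq.ne_zero, ENNReal.rpow_one]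
  have hq : ∀ i, (w i ^ (1 / q)) ^ q = w i := fun i => by
    rw [← ENNReal.rpow_mul, one_div_mul_cancel hpq.symm.ne_zero, ENNReal.rpow_one]
  rw [tsum_congr hsplit]
  simpa only [hp, hq] using
    ENNReal.tsum_mul_le_Lp_mul_Lq hpq (fun i => w i ^ (1 / p) * a i) fun i => w i ^ (1 / q)

section Balls

variable {X : Type*} [MetricSpace X] [MeasurableSpace X] {μ : Measure X} {cμ : ℝ}

theorem IsDoubling.measure_ball_ne_zero (h : IsDoubling μ cμ) (x : X) {r : ℝ} (hr : 0 < r) :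
    μ (ball x r) ≠ 0 :=
  (h.1 x r hr).1.ne'

theorem IsDoubling.measure_ball_ne_top (h : IsDoubling μ cμ) (x : X) {r : ℝ} (hr : 0 < r) :
    μ (ball x r) ≠ ∞ :=
  (h.1 x r hr).2.ne

theorem IsDoubling.measure_ball_five_mul_le (h : IsDoubling μ cμ) (x : X) {r : ℝ} (hr : 0 < r) :
    μ (ball x (5 * r)) ≤ ENNReal.ofReal cμ ^ 3 * μ (ball x r) :=
  calc μ (ball x (5 * r))
      ≤ μ (ball x (2 * (2 * (2 * r)))) := measure_mono (ball_subset_ball (by linarith))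
    _ ≤ ENNReal.ofReal cμ * (ENNReal.ofReal cμ * (ENNReal.ofReal cμ * μ (ball x r))) := by
      refine (h.2 x _ (by positivity)).trans ?_
      gcongr
      refine (h.2 x _ (by positivity)).trans ?_
      gcongr
      exact h.2 x r hr
    _ = ENNReal.ofReal cμ ^ 3 * μ (ball x r) := by ring

end Balls

noncomputable def meanOscillation {X : Type*} [MeasurableSpace X] (μ : Measure X) (f : X → ℝ)
    (s : Set X) : ℝ :=
  ⨍ x in s, |f x - ⨍ y in s, f y ∂μ| ∂μ

section CalderonZygmund

variable {X : Type*} [MetricSpace X] [MeasurableSpace X] {μ : Measure X} {cμ : ℝ} {x₀ : X}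
  {R lam : ℝ}

theorem IsJNp.rpow_tsum_le_of_isCZBalls {p K : ℝ} {f g : X → ℝ} {S : Set ℕ} {c : ℕ → X}
    {r : ℕ → ℝ} (hJN : IsJNp μ p x₀ R f K) (hp : 0 < p) (hK : 0 ≤ K)
    (hCZ : IsCZBalls μ cμ g x₀ R lam S c r) :
    (∑' i : S, μ (ball (c i) (5 * r i)) *
        ENNReal.ofReal (meanOscillation μ f (ball (c i) (5 * r i))) ^ p) ^ (1 / p)
      ≤ ENNReal.ofReal K := by
  obtain ⟨-, hc, hsub, hdisj, -⟩ := hCZ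
  have hdisj' : S.PairwiseDisjoint fun i => ball (c i) (5 * r i / 5) := by
    simpa only [mul_div_cancel_left₀ _ (by norm_num : (5 : ℝ) ≠ 0)] using hdisj
  calc (∑' i : S, μ (ball (c i) (5 * r i)) *
          ENNReal.ofReal (meanOscillation μ f (ball (c i) (5 * r i))) ^ p) ^ (1 / p)
      = (∑' i : S, μ (ball (c i) (5 * r i)) *
          ENNReal.ofReal (meanOscillation μ f (ball (c i) (5 * r i)) ^ p)) ^ (1 / p) := by
        simp only [ENNReal.ofReal_rpow_of_nonneg (setAverage_nonneg fun _ => abs_nonneg _) hp.le,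
          meanOscillation]
    _ ≤ ENNReal.ofReal (K ^ p) ^ (1 / p) :=
        ENNReal.rpow_le_rpow (hJN S c (fun i => 5 * r i) hc hsub hdisj') (by positivity)
    _ = ENNReal.ofReal K := by
        rw [← ENNReal.ofReal_rpow_of_nonneg hK hp.le, ← ENNReal.rpow_mul,
          mul_one_div_cancel hp.ne', ENNReal.rpow_one]

theorem IsCZBalls.tsum_measure_mul_meanOscillation_le {p q K : ℝ} {f g : X → ℝ} {S : Set ℕ}
    {c : ℕ → X} {r : ℕ → ℝ} (hCZ : IsCZBalls μ cμ g x₀ R lam S c r) (hdoub : IsDoubling μ cμ)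
    (hJN : IsJNp μ p x₀ R f K) (hK : 0 ≤ K) (hpq : p.HolderConjugate q) :
    ∑' i : S, μ (ball (c i) (5 * r i)) * ENNReal.ofReal (meanOscillation μ f (ball (c i) (5 * r i)))
      ≤ ENNReal.ofReal K * (ENNReal.ofReal cμ ^ 3 * ∑' i : S, μ (ball (c i) (r i))) ^ (1 / q) := by
  refine (ENNReal.tsum_mul_le_weighted_Lp_mul_Lq hpq _ _).trans ?_
  gcongr
  · exact hJN.rpow_tsum_le_of_isCZBalls hpq.pos hK hCZ
  · exact one_div_nonneg.2 hpq.symm.nonneg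
  · rw [← ENNReal.tsum_mul_left]
    exact ENNReal.tsum_le_tsum fun i => hdoub.measure_ball_five_mul_le _ (hCZ.1 i i.2)

variable {f : X → ℝ} {A : ℝ} {S₁ S₂ : Set ℕ} {c₁ c₂ : ℕ → X} {r₁ r₂ : ℕ → ℝ}

theorem IsCZBalls.pos_of_nested (hCZ₁ : IsCZBalls μ cμ (fun x => |f x - A|) x₀ R lam S₁ c₁ r₁)
    (hCZ₂ : IsCZBalls μ cμ (fun x => |f x - A|) x₀ R (2 * lam) S₂ c₂ r₂)
    (hdoub : IsDoubling μ cμ) (hf : IntegrableOn f (ball x₀ (11 * R)) μ)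
    (hnest : ∀ j ∈ S₂, ∃ i ∈ S₁, ball (c₂ j) (r₂ j) ⊆ ball (c₁ i) (5 * r₁ i))
    {j : ℕ} (hj : j ∈ S₂) : 0 < lam := by
  obtain ⟨hr₁, -, hsub₁, -, -, -, hosc₁⟩ := hCZ₁
  obtain ⟨hr₂, -, -, -, -, hosc₂, -⟩ := hCZ₂
  obtain ⟨i, hi, hji⟩ := hnest j hj
  have hD := hdoub.measure_ball_ne_top (r := 5 * r₁ i) (c₁ i) (by linarith [hr₁ i hi])
  exact pos_of_two_mul_lt_setAverage_of_setAverage_le (fun _ => abs_nonneg _) hji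
    (hdoub.measure_ball_ne_zero _ (hr₂ j hj)) hD
    ((hf.mono_set (hsub₁ i hi)).abs_sub_const hD A) (hosc₂ j hj).1 (hosc₁ i hi).2

theorem IsCZBalls.ofReal_mul_tsum_measure_le [OpensMeasurableSpace X]
    (hCZ₁ : IsCZBalls μ cμ (fun x => |f x - A|) x₀ R lam S₁ c₁ r₁)
    (hCZ₂ : IsCZBalls μ cμ (fun x => |f x - A|) x₀ R (2 * lam) S₂ c₂ r₂)
    (hdoub : IsDoubling μ cμ) (hf : IntegrableOn f (ball x₀ (11 * R)) μ)
    (hnest : ∀ j ∈ S₂, ∃ i ∈ S₁, ball (c₂ j) (r₂ j) ⊆ ball (c₁ i) (5 * r₁ i)) :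
    ENNReal.ofReal lam * ∑' j : S₂, μ (ball (c₂ j) (r₂ j))
      ≤ ∑' i : S₁, μ (ball (c₁ i) (5 * r₁ i)) *
          ENNReal.ofReal (meanOscillation μ f (ball (c₁ i) (5 * r₁ i))) := by
  obtain ⟨hr₁, -, hsub₁, -, -, -, hosc₁⟩ := hCZ₁
  obtain ⟨hr₂, -, -, hdisj₂, -, hosc₂, -⟩ := hCZ₂
  have hD : ∀ i ∈ S₁, μ (ball (c₁ i) (5 * r₁ i)) ≠ ∞ := fun i hi =>
    hdoub.measure_ball_ne_top _ (by linarith [hr₁ i hi])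
  have hfD : ∀ i ∈ S₁, IntegrableOn f (ball (c₁ i) (5 * r₁ i)) μ := fun i hi =>
    hf.mono_set (hsub₁ i hi)
  choose ι hιS hι using hnest
  let κ : S₂ → S₁ := fun j => ⟨ι j j.2, hιS j j.2⟩
  calc ENNReal.ofReal lam * ∑' j : S₂, μ (ball (c₂ j) (r₂ j))
      = ∑' j : S₂, ENNReal.ofReal lam * μ (ball (c₂ j) (r₂ j)) := ENNReal.tsum_mul_left.symm
    _ ≤ ∑' j : S₂, ∫⁻ x in ball (c₂ j) (r₂ j),
          ENNReal.ofReal |f x - ⨍ y in ball (c₁ (κ j)) (5 * r₁ (κ j)), f y ∂μ| ∂μ :=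
        ENNReal.tsum_le_tsum fun j => ofReal_mul_measure_le_setLIntegral (hι j j.2)
          (hdoub.measure_ball_ne_zero _ (hr₂ j j.2)) (hD _ (κ j).2) (hfD _ (κ j).2)
          (hosc₂ j j.2).1 (hosc₁ _ (κ j).2).2
    _ ≤ ∑' i : S₁, ∫⁻ x in ball (c₁ i) (5 * r₁ i),
          ENNReal.ofReal |f x - ⨍ y in ball (c₁ i) (5 * r₁ i), f y ∂μ| ∂μ :=
        tsum_setLIntegral_le_of_subset κ (fun _ => measurableSet_ball) (hdisj₂.subtype _ _)
          (fun j => hι j j.2) fun i x =>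
            ENNReal.ofReal |f x - ⨍ y in ball (c₁ i) (5 * r₁ i), f y ∂μ|
    _ = _ := tsum_congr fun i => setLIntegral_ofReal_eq_measure_mul_setAverage (hD i i.2)
          ((hfD i i.2).abs_sub_const (hD i i.2) _) fun _ => abs_nonneg _

end CalderonZygmund

theorem good_lambda_iteration_step_general {X : Type*} [MetricSpace X] [MeasurableSpace X]
    [BorelSpace X]
    (μ : Measure X) (cμ : ℝ) (hcμ : 1 ≤ cμ) (hdoub : IsDoubling μ cμ)
    (p q : ℝ) (hp : 1 < p) (hq : 1 / p + 1 / q = 1)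
    (x₀ : X) (R : ℝ) (f : X → ℝ)
    (hfint : IntegrableOn f (Metric.ball x₀ (11 * R)) μ)
    (K : ℝ) (hK : 0 ≤ K) (hJN : IsJNp μ p x₀ R f K)
    (lam : ℝ)
    (S₁ S₂ : Set ℕ) (c₁ c₂ : ℕ → X) (r₁ r₂ : ℕ → ℝ)
    (hCZ₁ : IsCZBalls μ cμ (fun x => |f x - ⨍ y in Metric.ball x₀ R, f y ∂μ|)
      x₀ R lam S₁ c₁ r₁)
    (hCZ₂ : IsCZBalls μ cμ (fun x => |f x - ⨍ y in Metric.ball x₀ R, f y ∂μ|)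
      x₀ R (2 * lam) S₂ c₂ r₂)
    (hnest : ∀ j ∈ S₂, ∃ i ∈ S₁,
      Metric.ball (c₂ j) (r₂ j) ⊆ Metric.ball (c₁ i) (5 * r₁ i)) :
    ∑' j : S₂, μ (Metric.ball (c₂ j.1) (r₂ j.1))
      ≤ ENNReal.ofReal (cμ ^ ((3 : ℝ) / q) * K / lam) *
        (∑' i : S₁, μ (Metric.ball (c₁ i.1) (r₁ i.1))) ^ (1 / q) := by
  rcases isEmpty_or_nonempty S₂ with hS₂ | ⟨⟨j, hj⟩⟩
  · simp
  have hpq : p.HolderConjugate q :=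
    Real.holderConjugate_iff.mpr ⟨hp, by simpa only [one_div] using hq⟩
  have hlam : 0 < lam := hCZ₁.pos_of_nested hCZ₂ hdoub hfint hnest hj
  have hcμ' : (ENNReal.ofReal cμ ^ 3) ^ (1 / q) = ENNReal.ofReal (cμ ^ ((3 : ℝ) / q)) := by
    rw [← ENNReal.ofReal_pow (by linarith), ENNReal.ofReal_rpow_of_nonneg (by positivity)
      (one_div_nonneg.2 hpq.symm.nonneg), ← Real.rpow_natCast, ← Real.rpow_mul (by linarith),
      Nat.cast_ofNat, mul_one_div]
  have key := (hCZ₁.ofReal_mul_tsum_measure_le hCZ₂ hdoub hfint hnest).trans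
    (hCZ₁.tsum_measure_mul_meanOscillation_le hdoub hJN hK hpq)
  rw [ENNReal.mul_rpow_of_nonneg _ _ (one_div_nonneg.2 hpq.symm.nonneg), hcμ'] at key
  have hlam₀ : ENNReal.ofReal lam ≠ 0 := (ENNReal.ofReal_pos.2 hlam).ne'
  calc ∑' j : S₂, μ (ball (c₂ j) (r₂ j))
      = (ENNReal.ofReal lam)⁻¹ * (ENNReal.ofReal lam * ∑' j : S₂, μ (ball (c₂ j) (r₂ j))) := by
        rw [← mul_assoc, ENNReal.inv_mul_cancel hlam₀ ENNReal.ofReal_ne_top, one_mul]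
    _ ≤ (ENNReal.ofReal lam)⁻¹ * (ENNReal.ofReal K * (ENNReal.ofReal (cμ ^ ((3 : ℝ) / q)) *
          (∑' i : S₁, μ (ball (c₁ i) (r₁ i))) ^ (1 / q))) := by gcongr
    _ = _ := by
        rw [ENNReal.ofReal_div_of_pos hlam, ENNReal.ofReal_mul (by positivity),
          ENNReal.div_eq_inv_mul]
        ring

/-- Good-λ estimate: if `f ∈ JN_p(B₀)` with constant `K`,
`λ ≥ μ(B₀)⁻¹ ∫_{11B₀} |f - f_{B₀}| dμ`, and `{B i(λ)}`, `{B j(2λ)}` are Calderón–Zygmund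
families for `|f - f_{B₀}|` at levels `λ` and `2λ` with each `B j(2λ)` contained in some
`5 B i(λ)`, then `∑ⱼ μ(B j(2λ)) ≤ (cμ^{3/q} K / λ) (∑ᵢ μ(B i(λ)))^{1/q}`, where `q` is the
conjugate exponent of `p`. -/
theorem good_lambda_iteration_step {X : Type*} [MetricSpace X] [MeasurableSpace X]
    [BorelSpace X]
    (μ : Measure X) (cμ : ℝ) (hcμ : 1 ≤ cμ) (hdoub : IsDoubling μ cμ)
    (p q : ℝ) (hp : 1 < p) (hq : 1 / p + 1 / q = 1)
    (x₀ : X) (R : ℝ) (hR : 0 < R) (f : X → ℝ)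
    (hfint : IntegrableOn f (Metric.ball x₀ (11 * R)) μ)
    (K : ℝ) (hK : 0 ≤ K) (hJN : IsJNp μ p x₀ R f K)
    (lam : ℝ)
    (hlam : (μ (Metric.ball x₀ R)).toReal⁻¹ *
        ∫ x in Metric.ball x₀ (11 * R),
          |f x - ⨍ y in Metric.ball x₀ R, f y ∂μ| ∂μ ≤ lam)
    (S₁ S₂ : Set ℕ) (c₁ c₂ : ℕ → X) (r₁ r₂ : ℕ → ℝ)
    (hCZ₁ : IsCZBalls μ cμ (fun x => |f x - ⨍ y in Metric.ball x₀ R, f y ∂μ|)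
      x₀ R lam S₁ c₁ r₁)
    (hCZ₂ : IsCZBalls μ cμ (fun x => |f x - ⨍ y in Metric.ball x₀ R, f y ∂μ|)
      x₀ R (2 * lam) S₂ c₂ r₂)
    (hnest : ∀ j ∈ S₂, ∃ i ∈ S₁,
      Metric.ball (c₂ j) (r₂ j) ⊆ Metric.ball (c₁ i) (5 * r₁ i)) :
    ∑' j : S₂, μ (Metric.ball (c₂ j.1) (r₂ j.1))
      ≤ ENNReal.ofReal (cμ ^ ((3 : ℝ) / q) * K / lam) *
        (∑' i : S₁, μ (Metric.ball (c₁ i.1) (r₁ i.1))) ^ (1 / q) :=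
  good_lambda_iteration_step_general μ cμ hcμ hdoub p q hp hq x₀ R f hfint K hK hJN lam S₁ S₂ c₁ c₂
    r₁ r₂ hCZ₁ hCZ₂ hnest
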